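/- arXiv:0912.0428 — 5 statements merged into one kernel-verified Lean document; each statement's English description precedes it below -/
import Mathlib

section
/- Let G(z) = (G₁(z),…,Gₙ(z)) with G_j(z) = λ_j z_j + a_j z^{kα} z_j + b_j z^{2kα} z_j for j = 1,…,n, where α ∈ ℕⁿ, α ≠ 0, k ≥ 1, and λ^α = 1. Then the induced map on the leaf space of the foliation {z^α = const}, i.e., the germ Φ of holomorphic self-map of (ℂ,0) determined by Φ(z^α) = G₁(z)^{α₁}⋯Gₙ(z)^{αₙ}, satisfies Φ(u) = u + Λ(G) u^{k+1} + O(|u|^{k+2}), where Λ(G) = Σ_{j=1}^n a_j α_j / λ_j; moreover Φ is a germ of biholomorphism of (ℂ,0). -/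
/-!
Writing `P(t) = ∏ⱼ (λⱼ + aⱼ t + bⱼ t²)^{αⱼ}`, one has `Φ(u) = u · P(u^k)` and
`∏ⱼ Gⱼ(z)^{αⱼ} = z^α · P(z^{kα})`. The polynomial `P` satisfies `P(0) = λ^α = 1` and, by the
logarithmic derivative of a product, `P'(0) = Σⱼ αⱼ aⱼ / λⱼ = Λ(G)`. Hence
`Φ(u) - u - Λ(G) u^{k+1} = u · (P(u^k) - P(0) - P'(0) u^k) = O(u^{2k+1})`, and `2k + 1 ≥ k + 2`.
Since `Φ` is a polynomial with `Φ'(0) = P(0) = 1`, the inverse function theorem makes it a local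
biholomorphism at `0`.
-/

open Polynomial Asymptotics Filter Topology

namespace Polynomial

variable {K : Type*} [Field K]

theorem eval_derivative_prod_pow {ι : Type*} (s : Finset ι) (p : ι → K[X]) (m : ι → ℕ) {x : K}
    (hp : ∀ j ∈ s, (p j).eval x ≠ 0) :
    (derivative (∏ j ∈ s, p j ^ m j)).eval x
      = (∑ j ∈ s, m j * (derivative (p j)).eval x / (p j).eval x)
        * ∏ j ∈ s, (p j).eval x ^ m j := by
  classical
  induction s using Finset.induction_on with
  | empty => simp
  | insert c s hc ih =>
    obtain ⟨hc0, hs⟩ := Finset.forall_mem_insert _ _ _ |>.1 hp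
    rw [Finset.prod_insert hc, derivative_mul, eval_add, eval_mul, eval_mul, ih hs,
      Finset.sum_insert hc, Finset.prod_insert hc, derivative_pow]
    simp only [eval_mul, eval_pow, eval_C, eval_prod]
    rcases Nat.eq_zero_or_pos (m c) with h0 | hpos
    · simp [h0]
    · rw [← Nat.sub_add_cancel hpos]
      push_cast
      field_simp
      ring

theorem exists_eq_C_add_C_mul_X_add_X_sq_mul {R : Type*} [CommRing R] (P : R[X]) :
    ∃ Q : R[X], P = C (P.eval 0) + C ((derivative P).eval 0) * X + X ^ 2 * Q := by
  have hdvd : X ^ 2 ∣ P - C (P.eval 0) - C ((derivative P).eval 0) * X := by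
    rw [X_pow_dvd_iff]
    intro d hd
    interval_cases d
    · simp [coeff_zero_eq_eval_zero]
    · simp [← coeff_zero_eq_eval_zero, coeff_derivative]
  obtain ⟨Q, hQ⟩ := hdvd
  exact ⟨Q, by rw [← hQ]; ring⟩

variable {𝕜 : Type*} [NontriviallyNormedField 𝕜]

theorem isBigO_mul_eval_pow_sub (P : 𝕜[X]) {k : ℕ} (hk : 1 ≤ k) :
    (fun u : 𝕜 => u * P.eval (u ^ k) - (P.eval 0 * u + (derivative P).eval 0 * u ^ (k + 1)))
      =O[𝓝 0] fun u => ‖u‖ ^ (k + 2) := by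
  obtain ⟨Q, hQ⟩ := P.exists_eq_C_add_C_mul_X_add_X_sq_mul
  have hrem : ∀ u : 𝕜, u * P.eval (u ^ k) - (P.eval 0 * u + (derivative P).eval 0 * u ^ (k + 1))
      = u ^ (k + 2) * (u ^ (k - 1) * Q.eval (u ^ k)) := by
    intro u
    have hPu : P.eval (u ^ k)
        = P.eval 0 + (derivative P).eval 0 * u ^ k + (u ^ k) ^ 2 * Q.eval (u ^ k) := by
      conv_lhs => rw [hQ]
      simp only [eval_add, eval_mul, eval_C, eval_X, eval_pow]
    obtain ⟨k, rfl⟩ := Nat.exists_eq_add_of_le' hk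
    rw [hPu, Nat.add_sub_cancel]
    ring
  have hbdd : (fun u : 𝕜 => u ^ (k - 1) * Q.eval (u ^ k)) =O[𝓝 0] fun _ => (1 : ℝ) :=
    (((continuous_pow _).mul (Q.continuous.comp (continuous_pow k))).tendsto 0).isBigO_one ℝ
  simpa only [hrem, norm_pow, mul_one] using
    ((isBigO_refl (fun u : 𝕜 => u ^ (k + 2)) _).norm_right.mul hbdd)

theorem hasStrictDerivAt_mul_eval_pow (P : 𝕜[X]) {k : ℕ} (hk : 1 ≤ k) :
    HasStrictDerivAt (fun u : 𝕜 => u * P.eval (u ^ k)) (P.eval 0) 0 := by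
  have := (hasStrictDerivAt_id (0 : 𝕜)).fun_mul
    ((P.hasStrictDerivAt _).comp 0 (hasStrictDerivAt_pow k (0 : 𝕜)))
  simpa [zero_pow (by omega : k ≠ 0)] using this

end Polynomial

theorem HasStrictDerivAt.exists_mem_nhds_injOn_image_mem_nhds {𝕜 : Type*}
    [NontriviallyNormedField 𝕜] [CompleteSpace 𝕜] {f : 𝕜 → 𝕜} {f' a : 𝕜}
    (hf : HasStrictDerivAt f f' a) (hf' : f' ≠ 0) :
    ∃ s ∈ 𝓝 a, Set.InjOn f s ∧ f '' s ∈ 𝓝 (f a) := by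
  have hF := hf.hasStrictFDerivAt_equiv hf'
  set e := hF.toOpenPartialHomeomorph f
  have hcoe : ⇑e = f := hF.toOpenPartialHomeomorph_coe
  have ha : a ∈ e.source := hF.mem_toOpenPartialHomeomorph_source
  refine ⟨e.source, e.open_source.mem_nhds ha, hcoe ▸ e.injOn, ?_⟩
  rw [← hcoe, e.image_source_eq_target]
  exact e.open_target.mem_nhds (hcoe ▸ e.map_source ha)

section LeafPolynomial

variable {ι K : Type*} [Fintype ι]

noncomputable def leafPolynomial [CommRing K] (lam a b : ι → K) (α : ι → ℕ) : K[X] :=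
  ∏ j, (C (lam j) + C (a j) * X + C (b j) * X ^ 2) ^ α j

theorem eval_leafPolynomial [CommRing K] (lam a b : ι → K) (α : ι → ℕ) (t : K) :
    (leafPolynomial lam a b α).eval t = ∏ j, (lam j + a j * t + b j * t ^ 2) ^ α j := by
  simp [leafPolynomial, eval_prod]

theorem eval_zero_derivative_leafPolynomial [Field K] (lam a b : ι → K) (α : ι → ℕ)
    (hlam : ∀ j, lam j ≠ 0) :
    (derivative (leafPolynomial lam a b α)).eval 0
      = (∑ j, a j * α j / lam j) * ∏ j, lam j ^ α j := by
  rw [leafPolynomial, eval_derivative_prod_pow _ _ _ fun j _ => by simpa using hlam j]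
  simp [mul_comm (α _ : K)]

end LeafPolynomial

theorem induced_leaf_space_germ_general
    (n : ℕ)
    (lam a b : Fin n → ℂ) (hlam : ∀ j, lam j ≠ 0)
    (α : Fin n → ℕ)
    (k : ℕ) (hk : 1 ≤ k)
    (hres : ∏ i, lam i ^ α i = 1)
    (G : (Fin n → ℂ) → (Fin n → ℂ))
    (hG : G = fun z j => lam j * z j + a j * (∏ i, z i ^ α i) ^ k * z j
        + b j * (∏ i, z i ^ α i) ^ (2 * k) * z j)
    (Φ : ℂ → ℂ)
    (hΦ : Φ = fun u => u * ∏ j, (lam j + a j * u ^ k + b j * u ^ (2 * k)) ^ α j) :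
    (∀ z : Fin n → ℂ, ∏ j, (G z j) ^ α j = Φ (∏ j, z j ^ α j))
    ∧ ((fun u : ℂ => Φ u - (u + (∑ j, a j * (α j : ℂ) / lam j) * u ^ (k + 1)))
        =O[nhds 0] fun u : ℂ => ‖u‖ ^ (k + 2))
    ∧ (AnalyticAt ℂ Φ 0 ∧ Φ 0 = 0 ∧
        ∃ s ∈ nhds (0 : ℂ), Set.InjOn Φ s ∧ Φ '' s ∈ nhds (0 : ℂ)) := by
  set P := leafPolynomial lam a b α
  have hΦP : Φ = fun u => u * P.eval (u ^ k) := by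
    simp only [hΦ, P, eval_leafPolynomial, ← pow_mul, mul_comm 2 k]
  have hP0 : P.eval 0 = 1 := by simpa [P, eval_leafPolynomial] using hres
  have hP'0 : (derivative P).eval 0 = ∑ j, a j * α j / lam j := by
    rw [eval_zero_derivative_leafPolynomial _ _ _ _ hlam, hres, mul_one]
  have hΦ' : HasStrictDerivAt Φ 1 0 := hP0 ▸ hΦP ▸ P.hasStrictDerivAt_mul_eval_pow hk
  have hΦ0 : Φ 0 = 0 := by simp [hΦ]
  refine ⟨fun z => ?_, ?_, ?_, hΦ0, ?_⟩
  · simp only [hG, hΦ, ← Finset.prod_mul_distrib, ← mul_pow]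
    exact Finset.prod_congr rfl fun j _ => by ring
  · simpa only [hΦP, hP0, hP'0, one_mul] using P.isBigO_mul_eval_pow_sub hk
  · rw [hΦP]
    exact Differentiable.analyticAt (by fun_prop) 0
  · simpa only [hΦ0] using hΦ'.exists_mem_nhds_injOn_image_mem_nhds one_ne_zero

/-- **The induced germ on the leaf space (formula (4.2)).**
Let `G(z) = (G₁(z),…,Gₙ(z))` with `G_j(z) = λ_j z_j + a_j z^{kα} z_j + b_j z^{2kα} z_j`,
where `α ∈ ℕⁿ`, `α ≠ 0`, `k ≥ 1`, `λ^α = 1`.  Then the induced map on the leaf space of the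
foliation `{z^α = const}`, i.e. the germ `Φ` of holomorphic self-map of `(ℂ,0)` determined by
`Φ(z^α) = G₁(z)^{α₁}⋯Gₙ(z)^{αₙ}`, satisfies `Φ(u) = u + Λ(G)u^{k+1} + O(|u|^{k+2})` with
`Λ(G) = Σ_j a_j α_j / λ_j`; moreover `Φ` is a germ of biholomorphism of `(ℂ,0)`. -/
theorem induced_leaf_space_germ
    (n : ℕ) (hn : 0 < n)
    (lam a b : Fin n → ℂ) (hlam : ∀ j, lam j ≠ 0)
    (α : Fin n → ℕ) (hα : α ≠ 0)
    (k : ℕ) (hk : 1 ≤ k)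
    (hres : ∏ i, lam i ^ α i = 1)
    (G : (Fin n → ℂ) → (Fin n → ℂ))
    (hG : G = fun z j => lam j * z j + a j * (∏ i, z i ^ α i) ^ k * z j
        + b j * (∏ i, z i ^ α i) ^ (2 * k) * z j)
    (Φ : ℂ → ℂ)
    (hΦ : Φ = fun u => u * ∏ j, (lam j + a j * u ^ k + b j * u ^ (2 * k)) ^ α j) :
    (∀ z : Fin n → ℂ, ∏ j, (G z j) ^ α j = Φ (∏ j, z j ^ α j))
    ∧ ((fun u : ℂ => Φ u - (u + (∑ j, a j * (α j : ℂ) / lam j) * u ^ (k + 1)))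
        =O[nhds 0] fun u : ℂ => ‖u‖ ^ (k + 2))
    ∧ (AnalyticAt ℂ Φ 0 ∧ Φ 0 = 0 ∧
        ∃ s ∈ nhds (0 : ℂ), Set.InjOn Φ s ∧ Φ '' s ∈ nhds (0 : ℂ)) :=
  induced_leaf_space_germ_general n lam a b hlam α k hk hres G hG Φ hΦ
end

section
/- Let F ∈ Diff(ℂⁿ;0) with eigenvalues λ₁,…,λₙ of dF₀. Suppose λ₁^q = 1 for some positive integer q, λ₁^l ≠ 1 for l = 1,…,q−1, and |λ_j| < 1 for j = 2,…,n. Let k be the order of F with respect to λ₁. Then k = ∞ (equivalently, F is formally linearizable in the first component) if and only if there exists a germ at 0 of a holomorphic non-singular curve, passing through 0, consisting of fixed points of F^{∘q}. -/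
/-!
Let `Φ = F^[q]`, whose linear part is `diag ν` with `ν₁ = 1` and `|ν_j| < 1` for `j ≠ 1`.

Given a curve of fixed points of `Φ`, build order by order a function `r = z₁ + O(‖z‖²)` with
`r ∘ Φ - r = O(‖z‖^t)`. At each order the homological equation for `diag ν` can be solved on every
monomial except `z₁^s`, and the coefficient of that monomial vanishes because `r ∘ Φ - r` vanishes
on the curve, which is tangent to the `z₁`-axis. Averaging `r` along `F`-orbits with weights
`λ₁^{-j}` gives `ρ` with `ρ ∘ F - λ₁ ρ = O(‖z‖^t)`, and replacing `z₁` by `ρ` is the required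
change of coordinates.

Conversely, the implicit function theorem gives a curve `γ` with `γ₁(ζ) = ζ` along which `Φ`
moves only the first coordinate. A change of coordinates tangent to the identity cannot shrink
that displacement by more than half, and after the change it is the displacement of `G^[q]`,
which is `O(‖ζ‖^t)`. This holds for every `t`, so the analytic displacement vanishes identically.
-/

open Filter Asymptotics Topology

section Asymptotics

variable {𝕜 : Type*} [NontriviallyNormedField 𝕜]
  {E F G : Type*} [NormedAddCommGroup E] [NormedSpace 𝕜 E] [NormedAddCommGroup F]
  [NormedSpace 𝕜 F] [NormedAddCommGroup G]

lemma isBigO_norm_pow_of_le {a b : ℕ} (hab : a ≤ b) :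
    (fun z : E => ‖z‖ ^ b) =O[𝓝 0] fun z => ‖z‖ ^ a := by
  refine IsBigO.of_bound 1 ?_
  filter_upwards [Metric.ball_mem_nhds (0 : E) one_pos] with z hz
  rw [mem_ball_zero_iff] at hz
  simpa using pow_le_pow_of_le_one (norm_nonneg z) hz.le hab

lemma DifferentiableAt.isBigO_norm_of_map_zero {f : E → F} (hf : DifferentiableAt 𝕜 f 0)
    (h0 : f 0 = 0) : f =O[𝓝 0] fun z => ‖z‖ := by
  simpa [h0] using hf.isBigO_sub.norm_right

lemma Asymptotics.IsBigO.comp_differentiableAt {g : F → G} {k : ℕ}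
    (hg : g =O[𝓝 0] fun y => ‖y‖ ^ k) {σ : E → F} (hσ : DifferentiableAt 𝕜 σ 0)
    (hσ0 : σ 0 = 0) : (fun x => g (σ x)) =O[𝓝 0] fun x => ‖x‖ ^ k := by
  have hσt : Tendsto σ (𝓝 0) (𝓝 0) := hσ0 ▸ hσ.continuousAt.tendsto
  exact (hg.comp_tendsto hσt).trans ((hσ.isBigO_norm_of_map_zero hσ0).norm_left.pow k)

lemma hasFDerivAt_of_isBigO_sub {f : E → F} {L : E →L[𝕜] F}
    (h : (fun z => f z - L z) =O[𝓝 0] fun z => ‖z‖ ^ 2) : HasFDerivAt f L 0 := by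
  have h' : HasFDerivAt (fun z => f z - L z) (0 : E →L[𝕜] F) 0 :=
    IsBigO.hasFDerivAt (by simpa using h) one_lt_two
  convert h'.add L.hasFDerivAt using 1
  · ext z; simp
  · simp

lemma AnalyticAt.isBigO_sub_of_hasFDerivAt {f : E → F} {L : E →L[𝕜] F} (hf : AnalyticAt 𝕜 f 0)
    (h0 : f 0 = 0) (hL : HasFDerivAt f L 0) :
    (fun z => f z - L z) =O[𝓝 0] fun z => ‖z‖ ^ 2 := by
  obtain ⟨p, hp⟩ := hf
  have hL1 := hL.unique hp.hasFDerivAt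
  have hsum : ∀ z, p.partialSum 2 z = L z := fun z => by
    simp only [FormalMultilinearSeries.partialSum, Finset.sum_range_succ, Finset.sum_range_zero,
      hp.coeff_zero, h0, hL1, continuousMultilinearCurryFin1_apply, zero_add]
    congr 1
  simpa [hsum] using hp.isBigO_sub_partialSum_pow 2

lemma FormalMultilinearSeries.partialSum_succ_of_apply_eq_zero
    {p : FormalMultilinearSeries 𝕜 E F} {s : ℕ} (h : ∀ m < s, ∀ z, (p m fun _ => z) = 0) (z : E) :
    p.partialSum (s + 1) z = p s fun _ => z := by
  rw [FormalMultilinearSeries.partialSum, Finset.sum_range_succ,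
    Finset.sum_eq_zero fun m hm => h m (Finset.mem_range.1 hm) z, zero_add]

namespace HasFPowerSeriesAt

variable {f : E → F} {p : FormalMultilinearSeries 𝕜 E F} {s : ℕ}

lemma apply_eq_zero_of_isBigO (hp : HasFPowerSeriesAt f p 0)
    (hf : f =O[𝓝 0] fun z => ‖z‖ ^ s) : ∀ m < s, ∀ z, (p m fun _ => z) = 0 := by
  intro m
  induction m using Nat.strong_induction_on with
  | _ m ih =>
    intro hm
    have hsum := hp.isBigO_sub_partialSum_pow (m + 1)
    simp only [zero_add, p.partialSum_succ_of_apply_eq_zero fun k hk => ih k hk (hk.trans hm)]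
      at hsum
    refine IsBigO.continuousMultilinearMap_apply_eq_zero ?_
    simpa using (hf.trans (isBigO_norm_pow_of_le hm)).sub hsum

lemma isBigO_sub_apply_of_isBigO (hp : HasFPowerSeriesAt f p 0)
    (hf : f =O[𝓝 0] fun z => ‖z‖ ^ s) :
    (fun z => f z - p s fun _ => z) =O[𝓝 0] fun z => ‖z‖ ^ (s + 1) := by
  simpa [p.partialSum_succ_of_apply_eq_zero (hp.apply_eq_zero_of_isBigO hf)] using
    hp.isBigO_sub_partialSum_pow (s + 1)

end HasFPowerSeriesAt

lemma AnalyticAt.eventuallyEq_zero_of_forall_isBigO {f : E → F} (hf : AnalyticAt 𝕜 f 0)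
    (h : ∀ s : ℕ, f =O[𝓝 0] fun z => ‖z‖ ^ s) : f =ᶠ[𝓝 0] 0 := by
  obtain ⟨p, r, hp⟩ := hf
  have hzero : ∀ m z, (p m fun _ => z) = 0 := fun m =>
    hp.hasFPowerSeriesAt.apply_eq_zero_of_isBigO (h (m + 1)) m m.lt_succ_self
  filter_upwards [Metric.eball_mem_nhds 0 hp.r_pos] with z hz
  have hsum := hp.hasSum hz
  simp only [hzero, zero_add] at hsum
  exact hsum.unique hasSum_zero

lemma ContinuousMultilinearMap.isBigO_apply_const {k : ℕ}
    (P : ContinuousMultilinearMap 𝕜 (fun _ : Fin k => E) F) (l : Filter E) :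
    (fun z => P fun _ => z) =O[l] fun z => ‖z‖ ^ k :=
  IsBigO.of_bound ‖P‖ (Eventually.of_forall fun z => by simpa using P.le_opNorm fun _ => z)

lemma ContinuousMultilinearMap.isBigO_apply_sub_apply {α : Type*} {l : Filter α} {s : ℕ}
    (Q : ContinuousMultilinearMap 𝕜 (fun _ : Fin (s + 1) => E) F) {a b : α → E} {φ ψ : α → ℝ}
    (ha : a =O[l] φ) (hb : b =O[l] φ) (hab : (fun x => a x - b x) =O[l] ψ) :
    (fun x => Q (fun _ => a x) - Q (fun _ => b x)) =O[l] fun x => φ x ^ s * ψ x := by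
  have hbound : (fun x => Q (fun _ => a x) - Q (fun _ => b x)) =O[l]
      fun x => (‖a x‖ + ‖b x‖) ^ s * ‖a x - b x‖ := by
    refine IsBigO.of_bound (‖Q‖ * (s + 1)) (Eventually.of_forall fun x => ?_)
    have hmax : max ‖a x‖ ‖b x‖ ^ s ≤ (‖a x‖ + ‖b x‖) ^ s := by
      gcongr; exact max_le_add_of_nonneg (norm_nonneg _) (norm_nonneg _)
    calc ‖Q (fun _ => a x) - Q (fun _ => b x)‖
        ≤ ‖Q‖ * (s + 1) * max ‖a x‖ ‖b x‖ ^ s * ‖a x - b x‖ := by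
          have h := Q.norm_image_sub_le (fun _ => a x) (fun _ => b x)
          rwa [pi_norm_const, pi_norm_const, Fintype.card_fin, Nat.cast_add, Nat.cast_one,
            add_tsub_cancel_right,
            show ((fun _ => a x) - fun _ => b x : Fin (s + 1) → E) = fun _ => a x - b x from rfl,
            pi_norm_const] at h
      _ ≤ ‖Q‖ * (s + 1) * ‖(‖a x‖ + ‖b x‖) ^ s * ‖a x - b x‖‖ := by
          rw [Real.norm_of_nonneg (by positivity), mul_assoc _ ((_ : ℝ) ^ s)]
          gcongr
  exact hbound.trans (((ha.norm_left.add hb.norm_left).pow s).mul hab.norm_left)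

lemma eventually_iterate_semiconj {X Y : Type*} [TopologicalSpace X] {x : X} {f : X → X}
    {Ψ : X → Y} {g : Y → Y} (hf : Tendsto f (𝓝 x) (𝓝 x))
    (h : ∀ᶠ z in 𝓝 x, Ψ (f z) = g (Ψ z)) (m : ℕ) :
    ∀ᶠ z in 𝓝 x, Ψ (f^[m] z) = g^[m] (Ψ z) := by
  induction m with
  | zero => exact Eventually.of_forall fun z => rfl
  | succ m ih =>
    filter_upwards [ih, (hf.iterate m).eventually h] with z h₁ h₂
    rw [Function.iterate_succ_apply', Function.iterate_succ_apply', h₂, h₁]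

lemma AnalyticAt.iterate {f : E → E} {x : E} (hf : AnalyticAt 𝕜 f x) (hx : f x = x) (m : ℕ) :
    AnalyticAt 𝕜 f^[m] x := by
  induction m with
  | zero => exact analyticAt_id
  | succ m ih =>
    rw [Function.iterate_succ']
    have hf' : AnalyticAt 𝕜 f (f^[m] x) := by rwa [Function.iterate_fixed hx]
    exact hf'.comp ih

lemma HasStrictFDerivAt.analyticAt_localInverse [CompleteSpace E] {f : E → F} {f' : E ≃L[𝕜] F}
    {a : E} (hf' : HasStrictFDerivAt f (f' : E →L[𝕜] F) a) (hf : AnalyticAt 𝕜 f a) :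
    AnalyticAt 𝕜 (hf'.localInverse f f' a) (f a) := by
  have hcoe := hf'.toOpenPartialHomeomorph_coe
  rw [hf'.localInverse_def]
  simpa [hcoe] using (hf'.toOpenPartialHomeomorph f).analyticAt_symm'
    hf'.mem_toOpenPartialHomeomorph_source (by rwa [hcoe]) (by rw [hcoe, hf'.hasFDerivAt.fderiv])

lemma ContinuousMultilinearMap.apply_deriv_eq_zero_of_isBigO {s : ℕ}
    (Q : ContinuousMultilinearMap 𝕜 (fun _ : Fin (s + 1) => E) F) {γ : 𝕜 → E}
    (hγ : AnalyticAt 𝕜 γ 0) (hγ0 : γ 0 = 0)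
    (hQ : (fun ζ => Q fun _ => γ ζ) =O[𝓝 0] fun ζ => ‖ζ‖ ^ (s + 2)) :
    (Q fun _ => deriv γ 0) = 0 := by
  set L : 𝕜 →L[𝕜] E := (1 : 𝕜 →L[𝕜] 𝕜).smulRight (deriv γ 0)
  have hL : HasFDerivAt γ L 0 := hγ.differentiableAt.hasDerivAt.hasFDerivAt
  have hline : (fun ζ => Q (fun _ => γ ζ) - Q (fun _ => L ζ)) =O[𝓝 0]
      fun ζ => ‖ζ‖ ^ s * ‖ζ‖ ^ 2 :=
    Q.isBigO_apply_sub_apply (hγ.differentiableAt.isBigO_norm_of_map_zero hγ0)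
      (L.differentiableAt.isBigO_norm_of_map_zero (_root_.map_zero L))
      (hγ.isBigO_sub_of_hasFDerivAt hγ0 hL)
  have hQL : (fun ζ => (Q.compContinuousLinearMap fun _ => L) fun _ => ζ) =O[𝓝 0]
      fun ζ => ‖ζ‖ ^ (s + 1 + 1) := by
    simp only [← pow_add] at hline
    simpa using hQ.sub hline
  simpa [L] using hQL.continuousMultilinearMap_apply_eq_zero 1

end Asymptotics

noncomputable section Diagonal

variable {n : ℕ}

def diagCLM (ν : Fin n → ℂ) : (Fin n → ℂ) →L[ℂ] (Fin n → ℂ) :=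
  ContinuousLinearMap.pi fun j => ν j • ContinuousLinearMap.proj j

@[simp] lemma diagCLM_apply (ν z : Fin n → ℂ) (j : Fin n) : diagCLM ν z j = ν j * z j := rfl

lemma diagCLM_pow (ν : Fin n → ℂ) (m : ℕ) : diagCLM ν ^ m = diagCLM (ν ^ m) := by
  induction m with
  | zero => ext z j; simp
  | succ m ih => ext z j; simp [pow_succ, ih, mul_assoc]

def diagCLE (d : Fin n → ℂ) (hd : ∀ j, d j ≠ 0) : (Fin n → ℂ) ≃L[ℂ] (Fin n → ℂ) :=
  ContinuousLinearEquiv.piCongrRight fun j =>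
    ContinuousLinearEquiv.unitsEquivAut ℂ (Units.mk0 (d j) (hd j))

@[simp] lemma coe_diagCLE (d : Fin n → ℂ) (hd : ∀ j, d j ≠ 0) :
    (diagCLE d hd : (Fin n → ℂ) →L[ℂ] (Fin n → ℂ)) = diagCLM d := by
  ext z j
  simp [diagCLE, mul_comm]

def lineProj (j : Fin n) : (Fin n → ℂ) →L[ℂ] (Fin n → ℂ) :=
  (ContinuousLinearMap.proj j).smulRight (Pi.single j 1)

@[simp] lemma lineProj_apply (j : Fin n) (z : Fin n → ℂ) : lineProj j z = z j • Pi.single j 1 :=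
  rfl

lemma sum_lineProj_apply (z : Fin n → ℂ) : ∑ j, lineProj j z = z := by
  ext k
  simp [Finset.sum_apply, Pi.single_apply]

namespace ContinuousMultilinearMap

variable {F : Type*} [NormedAddCommGroup F] [NormedSpace ℂ F] {s : ℕ}
  (Q : ContinuousMultilinearMap ℂ (fun _ : Fin s => Fin n → ℂ) F)

def coordPart (α : Fin s → Fin n) : ContinuousMultilinearMap ℂ (fun _ : Fin s => Fin n → ℂ) F :=
  Q.compContinuousLinearMap fun i => lineProj (α i)

lemma coordPart_apply (α : Fin s → Fin n) (m : Fin s → Fin n → ℂ) :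
    Q.coordPart α m = (∏ i, m i (α i)) • Q fun i => Pi.single (α i) 1 := by
  simp [coordPart, Q.map_smul_univ]

lemma sum_coordPart : ∑ α, Q.coordPart α = Q := by
  ext m
  conv_rhs => rw [← funext fun i => sum_lineProj_apply (m i), Q.map_sum]
  simp [coordPart]

lemma coordPart_apply_diagCLM (ν : Fin n → ℂ) (α : Fin s → Fin n) (m : Fin s → Fin n → ℂ) :
    Q.coordPart α (fun i => diagCLM ν (m i)) = (∏ i, ν (α i)) • Q.coordPart α m := by
  simp [coordPart_apply, Finset.prod_mul_distrib, smul_smul]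

theorem exists_compContinuousLinearMap_diagCLM_sub_eq (ν : Fin n → ℂ)
    (hQ : ∀ α : Fin s → Fin n, ∏ i, ν (α i) = 1 → (Q fun i => Pi.single (α i) 1) = 0) :
    ∃ P : ContinuousMultilinearMap ℂ (fun _ : Fin s => Fin n → ℂ) F,
      P.compContinuousLinearMap (fun _ => diagCLM ν) - P = Q := by
  -- On a resonant multi-index the coefficient is `0⁻¹ = 0`, harmless since `Q` has no part there.
  refine ⟨∑ α, (∏ i, ν (α i) - 1)⁻¹ • Q.coordPart α, ?_⟩
  have hpart : ∀ α m, (∏ i, ν (α i) - 1)⁻¹ •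
      (Q.coordPart α (fun i => diagCLM ν (m i)) - Q.coordPart α m) = Q.coordPart α m := by
    intro α m
    rw [coordPart_apply_diagCLM]
    nth_rewrite 2 [← one_smul ℂ (Q.coordPart α m)]
    rw [← sub_smul, smul_smul]
    by_cases h : ∏ i, ν (α i) = 1
    · simp [coordPart_apply, hQ α h]
    · rw [inv_mul_cancel₀ (sub_ne_zero.2 h), one_smul]
  ext m
  conv_rhs => rw [← Q.sum_coordPart]
  simp only [sub_apply, sum_apply, smul_apply, compContinuousLinearMap_apply,
    ← Finset.sum_sub_distrib, ← smul_sub, hpart]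

end ContinuousMultilinearMap

lemma eq_of_prod_eq_one_of_norm_lt_one {ν : Fin n → ℂ} {e : Fin n} (hνe : ν e = 1)
    (hν : ∀ j ≠ e, ‖ν j‖ < 1) {s : ℕ} {α : Fin s → Fin n} (h : ∏ i, ν (α i) = 1) (i : Fin s) :
    α i = e := by
  by_contra hi
  have hle : ∀ j, ‖ν j‖ ≤ 1 := fun j => by
    rcases eq_or_ne j e with rfl | hj
    · simp [hνe]
    · exact (hν j hj).le
  have hlt : ‖∏ k, ν (α k)‖ < 1 := by
    rw [norm_prod, ← Finset.mul_prod_erase _ _ (Finset.mem_univ i)]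
    calc ‖ν (α i)‖ * ∏ k ∈ Finset.univ.erase i, ‖ν (α k)‖ ≤ ‖ν (α i)‖ * 1 := by
          gcongr
          exact Finset.prod_le_one (fun _ _ => norm_nonneg _) fun k _ => hle (α k)
      _ < 1 := by simpa using hν _ hi
  simp [h] at hlt

end Diagonal

section FixedCurve

variable {n : ℕ} {e : Fin n}

lemma deriv_apply_eq_zero_of_eventually_fixed {ν : Fin n → ℂ} (hν : ∀ j ≠ e, ν j ≠ 1)
    {Φ : (Fin n → ℂ) → (Fin n → ℂ)} (hΦ : HasFDerivAt Φ (diagCLM ν) 0) {γ : ℂ → (Fin n → ℂ)}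
    (hγ : DifferentiableAt ℂ γ 0) (hγ0 : γ 0 = 0) (hfix : ∀ᶠ ζ in 𝓝 0, Φ (γ ζ) = γ ζ)
    {j : Fin n} (hj : j ≠ e) : deriv γ 0 j = 0 := by
  have hΦγ : HasDerivAt (fun ζ => Φ (γ ζ)) (diagCLM ν (deriv γ 0)) 0 :=
    (hγ0 ▸ hΦ).comp_hasDerivAt 0 hγ.hasDerivAt
  have hfixed : diagCLM ν (deriv γ 0) = deriv γ 0 :=
    (hΦγ.congr_of_eventuallyEq (hfix.mono fun ζ h => h.symm)).unique hγ.hasDerivAt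
  have hmul : (ν j - 1) * deriv γ 0 j = 0 := by
    have := congrFun hfixed j
    simp only [diagCLM_apply] at this
    linear_combination this
  exact (mul_eq_zero.1 hmul).resolve_left (sub_ne_zero.2 (hν j hj))

lemma HasFPowerSeriesAt.apply_single_eq_zero {F : Type*} [NormedAddCommGroup F]
    [NormedSpace ℂ F] {f : (Fin n → ℂ) → F} {p : FormalMultilinearSeries ℂ (Fin n → ℂ) F} {s : ℕ}
    (hp : HasFPowerSeriesAt f p 0) (hf : f =O[𝓝 0] fun z => ‖z‖ ^ (s + 1))
    {γ : ℂ → (Fin n → ℂ)} (hγ : AnalyticAt ℂ γ 0) (hγ0 : γ 0 = 0) (hγd : deriv γ 0 ≠ 0)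
    (hγe : ∀ j ≠ e, deriv γ 0 j = 0) (hfγ : ∀ᶠ ζ in 𝓝 0, f (γ ζ) = 0) :
    (p (s + 1) fun _ => Pi.single e 1) = 0 := by
  have hQγ : (fun ζ => p (s + 1) fun _ => γ ζ) =O[𝓝 0] fun ζ => ‖ζ‖ ^ (s + 2) := by
    refine ((hp.isBigO_sub_apply_of_isBigO hf).comp_differentiableAt hγ.differentiableAt
      hγ0).neg_left.congr' ?_ EventuallyEq.rfl
    filter_upwards [hfγ] with ζ h
    simp [h]
  have hv : deriv γ 0 = deriv γ 0 e • Pi.single e 1 := by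
    ext j
    rcases eq_or_ne j e with rfl | hj
    · simp
    · simp [hγe j hj, hj]
  have hve : deriv γ 0 e ≠ 0 := fun h => hγd (by rw [hv, h, zero_smul])
  have hQv := (p (s + 1)).apply_deriv_eq_zero_of_isBigO hγ hγ0 hQγ
  rw [hv, (p (s + 1)).map_smul_univ (fun _ => deriv γ 0 e)] at hQv
  exact (smul_eq_zero.1 hQv).resolve_left (by simpa using hve)

lemma exists_isBigO_comp_sub_self_succ {ν : Fin n → ℂ} (hνe : ν e = 1) (hν : ∀ j ≠ e, ‖ν j‖ < 1)
    {Φ : (Fin n → ℂ) → (Fin n → ℂ)} (hΦ : AnalyticAt ℂ Φ 0) (hΦ0 : Φ 0 = 0)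
    (hΦd : HasFDerivAt Φ (diagCLM ν) 0) {γ : ℂ → (Fin n → ℂ)} (hγ : AnalyticAt ℂ γ 0)
    (hγ0 : γ 0 = 0) (hγd : deriv γ 0 ≠ 0) (hfix : ∀ᶠ ζ in 𝓝 0, Φ (γ ζ) = γ ζ) {s : ℕ}
    {r : (Fin n → ℂ) → ℂ} (hr : AnalyticAt ℂ r 0)
    (hre : (fun z => r z - z e) =O[𝓝 0] fun z => ‖z‖ ^ 2)
    (hrΦ : (fun z => r (Φ z) - r z) =O[𝓝 0] fun z => ‖z‖ ^ (s + 2)) :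
    ∃ r' : (Fin n → ℂ) → ℂ, AnalyticAt ℂ r' 0 ∧
      ((fun z => r' z - z e) =O[𝓝 0] fun z => ‖z‖ ^ 2) ∧
      (fun z => r' (Φ z) - r' z) =O[𝓝 0] fun z => ‖z‖ ^ (s + 3) := by
  obtain ⟨p, hp⟩ : AnalyticAt ℂ (fun z => r (Φ z) - r z) 0 := ((hΦ0 ▸ hr).comp hΦ).sub hr
  have hν1 : ∀ j ≠ e, ν j ≠ 1 := fun j hj h => by simpa [h] using hν j hj
  have hQe : (p (s + 2) fun _ => Pi.single e 1) = 0 :=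
    hp.apply_single_eq_zero hrΦ hγ hγ0 hγd
      (fun j hj => deriv_apply_eq_zero_of_eventually_fixed hν1 hΦd hγ.differentiableAt hγ0 hfix hj)
      (hfix.mono fun ζ h => by simp [h])
  obtain ⟨P, hP⟩ := (p (s + 2)).exists_compContinuousLinearMap_diagCLM_sub_eq ν fun α hα => by
    simpa [eq_of_prod_eq_one_of_norm_lt_one hνe hν hα] using hQe
  have hPΦ : (fun z => (P fun _ => Φ z) - P fun _ => diagCLM ν z) =O[𝓝 0]
      fun z => ‖z‖ ^ (s + 1) * ‖z‖ ^ 2 :=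
    P.isBigO_apply_sub_apply (hΦd.differentiableAt.isBigO_norm_of_map_zero hΦ0)
      ((diagCLM ν).differentiableAt.isBigO_norm_of_map_zero (_root_.map_zero _))
      (hΦ.isBigO_sub_of_hasFDerivAt hΦ0 hΦd)
  simp only [← pow_add] at hPΦ
  refine ⟨fun z => r z - P fun _ => z, hr.sub ?_, ?_, ?_⟩
  · exact P.analyticAt.comp (analyticAt_pi_iff.2 fun _ => analyticAt_id)
  · refine (hre.sub ((P.isBigO_apply_const _).trans (isBigO_norm_pow_of_le (by omega)))).congr'
      (Eventually.of_forall fun z => by ring) EventuallyEq.rfl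
  · refine ((hp.isBigO_sub_apply_of_isBigO hrΦ).sub hPΦ).congr'
      (Eventually.of_forall fun z => ?_) EventuallyEq.rfl
    have hPz := congrArg (fun P => P fun _ => z) hP
    simp only [sub_apply,
      ContinuousMultilinearMap.compContinuousLinearMap_apply] at hPz
    linear_combination hPz

theorem exists_isBigO_comp_sub_self {ν : Fin n → ℂ} (hνe : ν e = 1) (hν : ∀ j ≠ e, ‖ν j‖ < 1)
    {Φ : (Fin n → ℂ) → (Fin n → ℂ)} (hΦ : AnalyticAt ℂ Φ 0) (hΦ0 : Φ 0 = 0)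
    (hΦd : HasFDerivAt Φ (diagCLM ν) 0) {γ : ℂ → (Fin n → ℂ)} (hγ : AnalyticAt ℂ γ 0)
    (hγ0 : γ 0 = 0) (hγd : deriv γ 0 ≠ 0) (hfix : ∀ᶠ ζ in 𝓝 0, Φ (γ ζ) = γ ζ) (s : ℕ) :
    ∃ r : (Fin n → ℂ) → ℂ, AnalyticAt ℂ r 0 ∧
      ((fun z => r z - z e) =O[𝓝 0] fun z => ‖z‖ ^ 2) ∧
      (fun z => r (Φ z) - r z) =O[𝓝 0] fun z => ‖z‖ ^ (s + 2) := by
  induction s with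
  | zero =>
    refine ⟨fun z => z e, (ContinuousLinearMap.proj (R := ℂ) (φ := fun _ => ℂ) e).analyticAt 0,
      by simp [isBigO_zero], ?_⟩
    simpa [hνe] using isBigO_pi.1 (hΦ.isBigO_sub_of_hasFDerivAt hΦ0 hΦd) e
  | succ s ih =>
    obtain ⟨r, hr, hre, hrΦ⟩ := ih
    exact exists_isBigO_comp_sub_self_succ hνe hν hΦ hΦ0 hΦd hγ hγ0 hγd hfix hr hre hrΦ

end FixedCurve

section TwistedAverage

variable {X : Type*} (f : X → X) (c : ℂ) (q : ℕ) (r : X → ℂ)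

noncomputable def twistedAverage (z : X) : ℂ :=
  (q : ℂ)⁻¹ * ∑ j ∈ Finset.range q, c⁻¹ ^ j * r (f^[j] z)

variable {f c q}

lemma twistedAverage_map_sub (hc : c ^ q = 1) (z : X) :
    twistedAverage f c q r (f z) - c * twistedAverage f c q r z =
      c * (q : ℂ)⁻¹ * (r (f^[q] z) - r z) := by
  rcases eq_or_ne c 0 with rfl | hc0
  · obtain rfl : q = 0 := by by_contra hq; simp [zero_pow hq] at hc
    simp [twistedAverage]
  have hshift : c⁻¹ * ∑ j ∈ Finset.range q, c⁻¹ ^ j * r (f^[j] (f z)) =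
      ∑ j ∈ Finset.range q, c⁻¹ ^ (j + 1) * r (f^[j + 1] z) := by
    rw [Finset.mul_sum]
    refine Finset.sum_congr rfl fun j _ => ?_
    rw [pow_succ, Function.iterate_succ_apply]
    ring
  have h1 := Finset.sum_range_succ' (fun j => c⁻¹ ^ j * r (f^[j] z)) q
  have h2 := Finset.sum_range_succ (fun j => c⁻¹ ^ j * r (f^[j] z)) q
  rw [inv_pow, hc, inv_one] at h2
  simp only [Function.iterate_zero_apply] at h1
  unfold twistedAverage
  linear_combination ((q : ℂ)⁻¹ * c) * (hshift - h1 + h2) -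
    (q : ℂ)⁻¹ * (∑ j ∈ Finset.range q, c⁻¹ ^ j * r (f^[j] (f z))) * mul_inv_cancel₀ hc0

lemma AnalyticAt.twistedAverage {E : Type*} [NormedAddCommGroup E] [NormedSpace ℂ E]
    {f : E → E} (hf : AnalyticAt ℂ f 0) (hf0 : f 0 = 0) {r : E → ℂ} (hr : AnalyticAt ℂ r 0)
    (c : ℂ) (q : ℕ) : AnalyticAt ℂ (twistedAverage f c q r) 0 := by
  refine analyticAt_const.mul (Finset.analyticAt_fun_sum _ fun j _ => analyticAt_const.mul ?_)
  have hr' : AnalyticAt ℂ r (f^[j] 0) := by rwa [Function.iterate_fixed hf0]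
  exact hr'.comp (hf.iterate hf0 j)

lemma twistedAverage_sub_isBigO {n : ℕ} {lam : Fin n → ℂ} {e : Fin n}
    {F : (Fin n → ℂ) → (Fin n → ℂ)} (hF : AnalyticAt ℂ F 0) (hF0 : F 0 = 0)
    (hFd : HasFDerivAt F (diagCLM lam) 0) {q : ℕ} (hq : q ≠ 0) (hq1 : lam e ^ q = 1)
    {r : (Fin n → ℂ) → ℂ} (hre : (fun z => r z - z e) =O[𝓝 0] fun z => ‖z‖ ^ 2) :
    (fun z => twistedAverage F (lam e) q r z - z e) =O[𝓝 0] fun z => ‖z‖ ^ 2 := by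
  have hc0 : lam e ≠ 0 := by rintro h; simp [h, zero_pow hq] at hq1
  have hterm : ∀ j : ℕ, (fun z => r (F^[j] z) - lam e ^ j * z e) =O[𝓝 0] fun z => ‖z‖ ^ 2 := by
    intro j
    have hFj : HasFDerivAt F^[j] (diagCLM (lam ^ j)) 0 := by
      simpa [diagCLM_pow] using hFd.iterate hF0 j
    have h1 := hre.comp_differentiableAt hFj.differentiableAt (Function.iterate_fixed hF0 j)
    have h2 := isBigO_pi.1 ((hF.iterate hF0 j).isBigO_sub_of_hasFDerivAt
      (Function.iterate_fixed hF0 j) hFj) e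
    refine (h1.add h2).congr' (Eventually.of_forall fun z => ?_) EventuallyEq.rfl
    simp only [Pi.sub_apply, diagCLM_apply, Pi.pow_apply]
    ring
  have hsum := (IsBigO.fun_sum (s := Finset.range q) fun j _ =>
    (hterm j).const_mul_left ((lam e)⁻¹ ^ j)).const_mul_left ((q : ℂ)⁻¹)
  refine hsum.congr' (Eventually.of_forall fun z => ?_) EventuallyEq.rfl
  have hcancel : ∀ j : ℕ, (lam e)⁻¹ ^ j * (r (F^[j] z) - lam e ^ j * z e) =
      (lam e)⁻¹ ^ j * r (F^[j] z) - z e := fun j => by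
    rw [mul_sub, ← mul_assoc, ← mul_pow, inv_mul_cancel₀ hc0, one_pow, one_mul]
  simp only [hcancel, Finset.sum_sub_distrib, Finset.sum_const, Finset.card_range, nsmul_eq_mul,
    twistedAverage]
  field_simp

end TwistedAverage

section Linearization

variable {n : ℕ}

-- The paper's `k = ∞` (formal linearizability in the `e`-th component), truncated at order `t`.
def LinearizableToOrder (F : (Fin n → ℂ) → (Fin n → ℂ)) (e : Fin n) (c : ℂ) (t : ℕ) : Prop :=
  ∃ Ψ G : (Fin n → ℂ) → (Fin n → ℂ),
    AnalyticAt ℂ Ψ 0 ∧ Ψ 0 = 0 ∧ ((fun z => Ψ z - z) =O[𝓝 0] fun z => ‖z‖ ^ 2) ∧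
    AnalyticAt ℂ G 0 ∧ (∀ᶠ z in 𝓝 0, Ψ (F z) = G (Ψ z)) ∧
    (fun z => G z e - c * z e) =O[𝓝 0] fun z => ‖z‖ ^ t

theorem linearizableToOrder_of_isBigO {F : (Fin n → ℂ) → (Fin n → ℂ)} (hF : AnalyticAt ℂ F 0)
    (hF0 : F 0 = 0) {e : Fin n} {c : ℂ} {t : ℕ} {ρ : (Fin n → ℂ) → ℂ} (hρ : AnalyticAt ℂ ρ 0)
    (hρe : (fun z => ρ z - z e) =O[𝓝 0] fun z => ‖z‖ ^ 2)
    (hρF : (fun z => ρ (F z) - c * ρ z) =O[𝓝 0] fun z => ‖z‖ ^ t) :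
    LinearizableToOrder F e c t := by
  set Ψ : (Fin n → ℂ) → (Fin n → ℂ) := fun z => z + Pi.single e (ρ z - z e)
  have hΨe : ∀ z, Ψ z e = ρ z := fun z => by simp [Ψ]
  have hΨ : AnalyticAt ℂ Ψ 0 := analyticAt_id.add <|
    (ContinuousLinearMap.single ℂ (fun _ => ℂ) e).analyticAt _ |>.comp <|
      hρ.sub ((ContinuousLinearMap.proj (R := ℂ) (φ := fun _ => ℂ) e).analyticAt 0)
  have hΨid : (fun z => Ψ z - z) =O[𝓝 0] fun z => ‖z‖ ^ 2 :=
    (IsBigO.of_bound 1 (Eventually.of_forall fun z => by simp [Ψ, Pi.norm_single])).trans hρe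
  have hΨ0 : Ψ 0 = 0 := by
    have h := IsBigO.eq_zero_of_norm_pow (f := fun z => Ψ z - z) (x₀ := 0) (n := 2)
      (by simpa only [sub_zero] using hΨid) two_ne_zero
    simpa using h
  have hΨs : HasStrictFDerivAt Ψ
      ((ContinuousLinearEquiv.refl ℂ (Fin n → ℂ) : (Fin n → ℂ) →L[ℂ] (Fin n → ℂ))) 0 := by
    simpa [(hasFDerivAt_of_isBigO_sub (L := ContinuousLinearMap.id ℂ _) hΨid).fderiv]
      using hΨ.hasStrictFDerivAt
  set σ := hΨs.localInverse Ψ _ 0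
  have hσ0 : σ 0 = 0 := by simpa [hΨ0] using hΨs.localInverse_apply_image
  have hσ : AnalyticAt ℂ σ 0 := by simpa [hΨ0] using hΨs.analyticAt_localInverse hΨ
  refine ⟨Ψ, fun w => Ψ (F (σ w)), hΨ, hΨ0, hΨid, ?_, ?_, ?_⟩
  · have hΨF : AnalyticAt ℂ Ψ (F (σ 0)) := by rwa [hσ0, hF0]
    have hF' : AnalyticAt ℂ F (σ 0) := by rwa [hσ0]
    exact AnalyticAt.fun_comp (f := fun w => F (σ w)) hΨF (hF'.fun_comp hσ)
  · filter_upwards [hΨs.eventually_left_inverse] with z hz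
    rw [show σ (Ψ z) = z from hz]
  · refine (hρF.comp_differentiableAt hσ.differentiableAt hσ0).congr' ?_ EventuallyEq.rfl
    filter_upwards [hΨ0 ▸ hΨs.eventually_right_inverse] with w hw
    rw [hΨe, ← hΨe (σ w), show Ψ (σ w) = w from hw]

theorem linearizableToOrder_of_fixedCurve {lam : Fin n → ℂ} {e : Fin n}
    {F : (Fin n → ℂ) → (Fin n → ℂ)} (hF : AnalyticAt ℂ F 0) (hF0 : F 0 = 0)
    (hFd : HasFDerivAt F (diagCLM lam) 0) {q : ℕ} (hq : q ≠ 0) (hq1 : lam e ^ q = 1)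
    (hsmall : ∀ j ≠ e, ‖lam j‖ < 1) {γ : ℂ → (Fin n → ℂ)} (hγ : AnalyticAt ℂ γ 0)
    (hγ0 : γ 0 = 0) (hγd : deriv γ 0 ≠ 0) (hfix : ∀ᶠ ζ in 𝓝 0, F^[q] (γ ζ) = γ ζ) (t : ℕ) :
    LinearizableToOrder F e (lam e) t := by
  have hΦd : HasFDerivAt F^[q] (diagCLM (lam ^ q)) 0 := by
    simpa [diagCLM_pow] using hFd.iterate hF0 q
  have hν : ∀ j ≠ e, ‖(lam ^ q) j‖ < 1 := fun j hj => by
    simpa using pow_lt_one₀ (norm_nonneg _) (hsmall j hj) hq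
  obtain ⟨r, hr, hre, hrΦ⟩ := exists_isBigO_comp_sub_self (by simpa using hq1) hν
    (hF.iterate hF0 q) (Function.iterate_fixed hF0 q) hΦd hγ hγ0 hγd hfix t
  refine linearizableToOrder_of_isBigO hF hF0 (hF.twistedAverage hF0 hr (lam e) q)
    (twistedAverage_sub_isBigO hF hF0 hFd hq hq1 hre) ?_
  simp only [twistedAverage_map_sub r hq1]
  exact (hrΦ.const_mul_left _).trans (isBigO_norm_pow_of_le (by omega))

end Linearization

section Converse

variable {n : ℕ} {e : Fin n}

lemma analyticAt_update_sub_self {Φ : (Fin n → ℂ) → (Fin n → ℂ)} (hΦ : AnalyticAt ℂ Φ 0) :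
    AnalyticAt ℂ (fun z => Function.update (Φ z - z) e (z e)) 0 := by
  have hproj : ∀ j x, AnalyticAt ℂ (fun z : Fin n → ℂ => z j) x := fun j x =>
    (ContinuousLinearMap.proj (R := ℂ) (φ := fun _ => ℂ) j).analyticAt x
  refine analyticAt_pi_iff.2 fun j => ?_
  rcases eq_or_ne j e with rfl | hj
  · simpa using hproj j 0
  · exact (((hproj j _).comp hΦ).fun_sub (hproj j 0)).congr
      (Eventually.of_forall fun z => by simp [hj])

lemma hasFDerivAt_update_sub_self {ν : Fin n → ℂ} {Φ : (Fin n → ℂ) → (Fin n → ℂ)}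
    (hΦ : AnalyticAt ℂ Φ 0) (hΦ0 : Φ 0 = 0) (hΦd : HasFDerivAt Φ (diagCLM ν) 0) :
    HasFDerivAt (fun z => Function.update (Φ z - z) e (z e))
      (diagCLM (Function.update (ν - 1) e 1)) 0 := by
  have hΦ2 := isBigO_pi.1 (hΦ.isBigO_sub_of_hasFDerivAt hΦ0 hΦd)
  refine hasFDerivAt_of_isBigO_sub <| isBigO_pi.2 fun j => ?_
  rcases eq_or_ne j e with rfl | hj
  · simp [isBigO_zero]
  · refine (hΦ2 j).congr' (Eventually.of_forall fun z => ?_) EventuallyEq.rfl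
    simp only [Pi.sub_apply, diagCLM_apply, Function.update_of_ne hj, Pi.one_apply]
    ring

theorem exists_curve_eventually_apply_eq {ν : Fin n → ℂ} (hν : ∀ j ≠ e, ν j ≠ 1)
    {Φ : (Fin n → ℂ) → (Fin n → ℂ)} (hΦ : AnalyticAt ℂ Φ 0) (hΦ0 : Φ 0 = 0)
    (hΦd : HasFDerivAt Φ (diagCLM ν) 0) :
    ∃ γ : ℂ → (Fin n → ℂ), AnalyticAt ℂ γ 0 ∧ γ 0 = 0 ∧
      ∀ᶠ ζ in 𝓝 0, γ ζ e = ζ ∧ ∀ j ≠ e, Φ (γ ζ) j = γ ζ j := by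
  set Θ : (Fin n → ℂ) → (Fin n → ℂ) := fun z => Function.update (Φ z - z) e (z e)
  have hd : ∀ j, Function.update (ν - 1) e 1 j ≠ 0 := fun j => by
    rcases eq_or_ne j e with rfl | hj
    · simp
    · simpa [hj, sub_eq_zero] using hν j hj
  have hΘ : AnalyticAt ℂ Θ 0 := analyticAt_update_sub_self hΦ
  have hΘd : HasStrictFDerivAt Θ (diagCLE _ hd : (Fin n → ℂ) →L[ℂ] (Fin n → ℂ)) 0 := by
    rw [coe_diagCLE, ← (hasFDerivAt_update_sub_self hΦ hΦ0 hΦd).fderiv]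
    exact hΘ.hasStrictFDerivAt
  have hΘ0 : Θ 0 = 0 := by
    ext j
    rcases eq_or_ne j e with rfl | hj
    · simp [Θ]
    · simp [Θ, hj, hΦ0]
  set σ := hΘd.localInverse Θ _ 0
  have hσ : AnalyticAt ℂ σ 0 := by simpa [hΘ0] using hΘd.analyticAt_localInverse hΘ
  have hsingle : AnalyticAt ℂ (fun ζ : ℂ => (Pi.single e ζ : Fin n → ℂ)) 0 :=
    (ContinuousLinearMap.single ℂ (fun _ => ℂ) e).analyticAt 0
  refine ⟨fun ζ => σ (Pi.single e ζ), ?_, ?_, ?_⟩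
  · exact AnalyticAt.fun_comp (f := fun ζ : ℂ => (Pi.single e ζ : Fin n → ℂ))
      (by simpa using hσ) hsingle
  · simpa [hΘ0] using hΘd.localInverse_apply_image
  · have hright : ∀ᶠ ζ in 𝓝 (0 : ℂ), Θ (σ (Pi.single e ζ)) = Pi.single e ζ :=
      (hsingle.continuousAt.tendsto.eventually (by simpa [hΘ0] using hΘd.eventually_right_inverse))
    filter_upwards [hright] with ζ hζ
    refine ⟨by simpa [Θ] using congrFun hζ e, fun j hj => ?_⟩
    have := congrFun hζ j
    simp only [Θ, Function.update_of_ne hj, Pi.sub_apply, Pi.single_eq_of_ne hj] at this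
    exact sub_eq_zero.1 this

lemma isBigO_iterate_apply_sub {G : (Fin n → ℂ) → (Fin n → ℂ)} (hG : DifferentiableAt ℂ G 0)
    (hG0 : G 0 = 0) {c : ℂ} {t : ℕ} (hGe : (fun w => G w e - c * w e) =O[𝓝 0] fun w => ‖w‖ ^ t)
    (m : ℕ) : (fun w => G^[m] w e - c ^ m * w e) =O[𝓝 0] fun w => ‖w‖ ^ t := by
  induction m with
  | zero => simp [isBigO_zero]
  | succ m ih =>
    have hGm : DifferentiableAt ℂ G^[m] 0 := (hG.hasFDerivAt.iterate hG0 m).differentiableAt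
    refine ((hGe.comp_differentiableAt hGm (Function.iterate_fixed hG0 m)).add
      (ih.const_mul_left c)).congr' (Eventually.of_forall fun w => ?_) EventuallyEq.rfl
    simp only [Function.iterate_succ_apply']
    ring

lemma ApproximatesLinearOn.norm_sub_le_two_mul {Ψ : (Fin n → ℂ) → (Fin n → ℂ)}
    {s : Set (Fin n → ℂ)}
    (hΨ : ApproximatesLinearOn Ψ (ContinuousLinearMap.id ℂ (Fin n → ℂ)) s (1 / 2))
    {a b : Fin n → ℂ} (ha : a ∈ s) (hb : b ∈ s) (hab : ∀ j ≠ e, a j = b j) :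
    ‖a e - b e‖ ≤ 2 * ‖Ψ a e - Ψ b e‖ := by
  have hdisp : a - b = Pi.single e (a e - b e) := by
    ext j
    rcases eq_or_ne j e with rfl | hj
    · simp
    · simp [hj, hab j hj]
  have happrox := hΨ _ ha _ hb
  rw [ContinuousLinearMap.id_apply, hdisp, Pi.norm_single] at happrox
  have he := (norm_le_pi_norm _ e).trans happrox
  simp only [Pi.sub_apply, Pi.single_eq_same, NNReal.coe_div, NNReal.coe_one,
    NNReal.coe_ofNat] at he
  linarith [norm_le_norm_add_norm_sub (Ψ a e - Ψ b e) (a e - b e)]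

theorem LinearizableToOrder.isBigO_iterate_apply_sub_nhdsWithin {F : (Fin n → ℂ) → (Fin n → ℂ)}
    (hF : ContinuousAt F 0) (hF0 : F 0 = 0) {c : ℂ} {q t : ℕ} (hc : c ^ q = 1)
    (hlin : LinearizableToOrder F e c t) :
    (fun z => F^[q] z e - z e) =O[𝓝[{z | ∀ j ≠ e, F^[q] z j = z j}] 0] fun z => ‖z‖ ^ t := by
  obtain ⟨Ψ, G, hΨ, hΨ0, hΨid, hG, hconj, hGe⟩ := hlin
  have hFt : Tendsto F (𝓝 0) (𝓝 0) := by simpa [hF0] using hF.tendsto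
  have hG0 : G 0 = 0 := by simpa [hF0, hΨ0] using hconj.self_of_nhds.symm
  have hGq : (fun z => G^[q] (Ψ z) e - Ψ z e) =O[𝓝 0] fun z => ‖z‖ ^ t := by
    simpa [hc] using (isBigO_iterate_apply_sub hG.differentiableAt hG0 hGe q).comp_differentiableAt
      hΨ.differentiableAt hΨ0
  have hΨs : HasStrictFDerivAt Ψ (ContinuousLinearMap.id ℂ (Fin n → ℂ)) 0 := by
    simpa [(hasFDerivAt_of_isBigO_sub (L := ContinuousLinearMap.id ℂ _) hΨid).fderiv]
      using hΨ.hasStrictFDerivAt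
  obtain ⟨s, hs, hΨs⟩ := hΨs.approximates_deriv_on_nhds (c := 1 / 2) (Or.inr (by norm_num))
  have hbound : ∀ᶠ z in 𝓝[{z | ∀ j ≠ e, F^[q] z j = z j}] 0,
      ‖F^[q] z e - z e‖ ≤ 2 * ‖G^[q] (Ψ z) e - Ψ z e‖ := by
    filter_upwards [self_mem_nhdsWithin, nhdsWithin_le_nhds hs,
      nhdsWithin_le_nhds ((hFt.iterate q).eventually hs),
      nhdsWithin_le_nhds (eventually_iterate_semiconj hFt hconj q)] with z hzS hzs hFzs hzconj
    rw [← hzconj]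
    exact hΨs.norm_sub_le_two_mul hFzs hzs hzS
  exact (IsBigO.of_bound 2 (hbound.mono fun z h => by simpa using h)).trans
    (hGq.mono nhdsWithin_le_nhds)

theorem exists_fixedCurve_of_forall_linearizableToOrder {lam : Fin n → ℂ}
    {F : (Fin n → ℂ) → (Fin n → ℂ)} (hF : AnalyticAt ℂ F 0) (hF0 : F 0 = 0)
    (hFd : HasFDerivAt F (diagCLM lam) 0) {q : ℕ} (hq : q ≠ 0) (hq1 : lam e ^ q = 1)
    (hsmall : ∀ j ≠ e, ‖lam j‖ < 1) (hlin : ∀ t, LinearizableToOrder F e (lam e) t) :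
    ∃ γ : ℂ → (Fin n → ℂ), AnalyticAt ℂ γ 0 ∧ γ 0 = 0 ∧ deriv γ 0 ≠ 0 ∧
      (∃ s ∈ 𝓝 0, Set.InjOn γ s) ∧ ∀ᶠ ζ in 𝓝 0, F^[q] (γ ζ) = γ ζ := by
  have hΦd : HasFDerivAt F^[q] (diagCLM (lam ^ q)) 0 := by
    simpa [diagCLM_pow] using hFd.iterate hF0 q
  have hν1 : ∀ j ≠ e, (lam ^ q) j ≠ 1 := fun j hj h => by
    have hlt : ‖(lam ^ q) j‖ < 1 := by simpa using pow_lt_one₀ (norm_nonneg _) (hsmall j hj) hq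
    simp [h] at hlt
  have hΦ := hF.iterate hF0 q
  obtain ⟨γ, hγ, hγ0, hγev⟩ :=
    exists_curve_eventually_apply_eq hν1 hΦ (Function.iterate_fixed hF0 q) hΦd
  have hγS : Tendsto γ (𝓝 0) (𝓝[{z | ∀ j ≠ e, F^[q] z j = z j}] 0) :=
    tendsto_nhdsWithin_iff.2 ⟨by simpa [hγ0] using hγ.continuousAt.tendsto,
      hγev.mono fun ζ h => h.2⟩
  have hdisp : (fun ζ => F^[q] (γ ζ) e - γ ζ e) =ᶠ[𝓝 0] 0 := by
    refine AnalyticAt.eventuallyEq_zero_of_forall_isBigO (𝕜 := ℂ) ?_ fun t => ?_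
    · have hΦγ : AnalyticAt ℂ (fun ζ => F^[q] (γ ζ)) 0 :=
        AnalyticAt.fun_comp (f := γ) (by rwa [hγ0]) hγ
      exact (analyticAt_pi_iff.1 hΦγ e).fun_sub (analyticAt_pi_iff.1 hγ e)
    · exact (((hlin t).isBigO_iterate_apply_sub_nhdsWithin hF.continuousAt hF0 hq1).comp_tendsto
        hγS).trans ((hγ.differentiableAt.isBigO_norm_of_map_zero hγ0).norm_left.pow t)
  refine ⟨γ, hγ, hγ0, fun hγd => ?_,
    ⟨{ζ | γ ζ e = ζ}, hγev.mono fun ζ h => h.1, fun a ha b hb hab => ?_⟩, ?_⟩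
  · have h1 := hasDerivAt_pi.1 hγ.differentiableAt.hasDerivAt e
    have h2 : HasDerivAt (fun ζ => γ ζ e) 1 0 :=
      (hasDerivAt_id 0).congr_of_eventuallyEq (hγev.mono fun ζ h => h.1)
    simpa [hγd] using h1.unique h2
  · rw [← show γ a e = a from ha, ← show γ b e = b from hb, hab]
  · filter_upwards [hγev, hdisp] with ζ hζ hζe
    ext j
    rcases eq_or_ne j e with rfl | hj
    · exact sub_eq_zero.1 hζe
    · exact hζ.2 j hj

end Converse

theorem semi_attractive_formally_linearizable_iff_fixed_curve_general
    (n : ℕ) (hn : 0 < n)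
    (lam : Fin n → ℂ)
    (F : (Fin n → ℂ) → (Fin n → ℂ))
    (hF : AnalyticAt ℂ F 0) (hF0 : F 0 = 0)
    (hdiag : ∀ j : Fin n,
      (fun z : Fin n → ℂ => F z j - lam j * z j) =O[nhds 0] fun z : Fin n → ℂ => ‖z‖ ^ 2)
    (q : ℕ) (hq : 0 < q)
    (hq1 : lam ⟨0, hn⟩ ^ q = 1)
    (hsmall : ∀ j : Fin n, j ≠ ⟨0, hn⟩ → ‖lam j‖ < 1) :
    (∀ t : ℕ, ∃ Ψ G : (Fin n → ℂ) → (Fin n → ℂ),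
        AnalyticAt ℂ Ψ 0 ∧ Ψ 0 = 0 ∧
        ((fun z : Fin n → ℂ => Ψ z - z) =O[nhds 0] fun z : Fin n → ℂ => ‖z‖ ^ 2) ∧
        AnalyticAt ℂ G 0 ∧ (∀ᶠ z in nhds (0 : Fin n → ℂ), Ψ (F z) = G (Ψ z)) ∧
        ((fun z : Fin n → ℂ => G z ⟨0, hn⟩ - lam ⟨0, hn⟩ * z ⟨0, hn⟩)
          =O[nhds 0] fun z : Fin n → ℂ => ‖z‖ ^ t))
    ↔ (∃ γ : ℂ → (Fin n → ℂ),
        AnalyticAt ℂ γ 0 ∧ γ 0 = 0 ∧ deriv γ 0 ≠ 0 ∧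
        (∃ s ∈ nhds (0 : ℂ), Set.InjOn γ s) ∧
        ∀ᶠ ζ in nhds (0 : ℂ), F^[q] (γ ζ) = γ ζ) := by
  have hFd : HasFDerivAt F (diagCLM lam) 0 := hasFDerivAt_of_isBigO_sub (isBigO_pi.2 hdiag)
  constructor
  · exact exists_fixedCurve_of_forall_linearizableToOrder hF hF0 hFd hq.ne' hq1 hsmall
  · rintro ⟨γ, hγ, hγ0, hγd, -, hfix⟩ t
    exact linearizableToOrder_of_fixedCurve hF hF0 hFd hq.ne' hq1 hsmall hγ hγ0 hγd hfix t

/-- **Semi-attractive case (Corollary 6.1 (2)).**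
Let `F ∈ Diff(ℂⁿ;0)` with eigenvalues `λ₁,…,λₙ` of `dF₀`.  Suppose `λ₁^q = 1` for a positive
integer `q`, `λ₁^l ≠ 1` for `l = 1,…,q-1`, and `|λ_j| < 1` for `j = 2,…,n`.  Then the order of
`F` with respect to `λ₁` is `k = ∞` — equivalently, `F` is formally linearizable in the first
component, formalized here order by order: for every `t` there is a change of coordinates
`Ψ(z) = z + O(|z|²)` conjugating `F` to a germ `G` with `G₁(z) = λ₁ z₁ + O(|z|^t)` — if and
only if there exists a germ at `0` of a holomorphic non-singular curve through `0`
consisting of fixed points of `F^{∘q}`.  (Indices are 0-based: `z₁` is `z 0`.) -/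
theorem semi_attractive_formally_linearizable_iff_fixed_curve
    (n : ℕ) (hn : 0 < n)
    (lam : Fin n → ℂ)
    (F : (Fin n → ℂ) → (Fin n → ℂ))
    (hF : AnalyticAt ℂ F 0) (hF0 : F 0 = 0)
    (hdiag : ∀ j : Fin n,
      (fun z : Fin n → ℂ => F z j - lam j * z j) =O[nhds 0] fun z : Fin n → ℂ => ‖z‖ ^ 2)
    (q : ℕ) (hq : 0 < q)
    (hq1 : lam ⟨0, hn⟩ ^ q = 1)
    (hqmin : ∀ l : ℕ, 1 ≤ l → l < q → lam ⟨0, hn⟩ ^ l ≠ 1)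
    (hsmall : ∀ j : Fin n, j ≠ ⟨0, hn⟩ → ‖lam j‖ < 1) :
    (∀ t : ℕ, ∃ Ψ G : (Fin n → ℂ) → (Fin n → ℂ),
        AnalyticAt ℂ Ψ 0 ∧ Ψ 0 = 0 ∧
        ((fun z : Fin n → ℂ => Ψ z - z) =O[nhds 0] fun z : Fin n → ℂ => ‖z‖ ^ 2) ∧
        AnalyticAt ℂ G 0 ∧ (∀ᶠ z in nhds (0 : Fin n → ℂ), Ψ (F z) = G (Ψ z)) ∧
        ((fun z : Fin n → ℂ => G z ⟨0, hn⟩ - lam ⟨0, hn⟩ * z ⟨0, hn⟩)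
          =O[nhds 0] fun z : Fin n → ℂ => ‖z‖ ^ t))
    ↔ (∃ γ : ℂ → (Fin n → ℂ),
        AnalyticAt ℂ γ 0 ∧ γ 0 = 0 ∧ deriv γ 0 ≠ 0 ∧
        (∃ s ∈ nhds (0 : ℂ), Set.InjOn γ s) ∧
        ∀ᶠ ζ in nhds (0 : ℂ), F^[q] (γ ζ) = γ ζ) :=
  semi_attractive_formally_linearizable_iff_fixed_curve_general n hn lam F hF hF0 hdiag q hq hq1
    hsmall
end

section
/- Let λ₁,…,λₙ be nonzero complex numbers and suppose there exists a multi-index α = (α₁,…,α_m,0,…,0) ≠ 0 ∈ ℕⁿ (1 ≤ m ≤ n) such that for each j ∈ {1,…,m}, the set of all l ∈ ℕⁿ with |l| ≥ 2 and λ_j = λ^l equals exactly {kα + e_j : k ≥ 1 integer} (the one-resonance condition with respect to {λ₁,…,λ_m}). Then λ_j ≠ λ_s for every j ∈ {1,…,m} and every s ∈ {1,…,n} with s ≠ j. -/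
/-!
Taking `k = 1` shows that `α + e_j` is a resonance, so `λ^α λ_j = λ_j` and `λ^α = 1`.
If `λ_j = λ_s` with `s ≠ j`, then `λ^(α + e_s) = λ_s = λ_j` and `|α + e_s| = |α + e_j| ≥ 2`,
so `α + e_s` is a resonance `kα + e_j`; its `j`-th entry reads `α_j = kα_j + 1`, impossible for `k ≥ 1`.
-/

open Finset

theorem prod_pow_add_ite_one {ι M : Type*} [Fintype ι] [DecidableEq ι] [CommMonoid M]
    (x : ι → M) (a : ι → ℕ) (t : ι) :
    ∏ i, x i ^ (a i + if i = t then 1 else 0) = (∏ i, x i ^ a i) * x t := by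
  simp only [pow_add, prod_mul_distrib, pow_ite, pow_one, pow_zero, prod_ite_eq', mem_univ,
    if_true]

theorem sum_add_ite_one {ι : Type*} [Fintype ι] [DecidableEq ι] (a : ι → ℕ) (t : ι) :
    ∑ i, (a i + if i = t then 1 else 0) = ∑ i, a i + 1 := by
  simp [sum_add_distrib]

theorem one_resonant_eigenvalues_distinct_general
    (n m : ℕ)
    (lam : Fin n → ℂ) (hlam : ∀ i, lam i ≠ 0)
    (α : Fin n → ℕ)
    (hres : ∀ j : Fin n, (j : ℕ) < m →
      ∀ l : Fin n → ℕ,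
        (2 ≤ ∑ i, l i ∧ lam j = ∏ i, lam i ^ l i) ↔
          (∃ k : ℕ, 1 ≤ k ∧ l = fun i => k * α i + if i = j then 1 else 0)) :
    ∀ j s : Fin n, (j : ℕ) < m → s ≠ j → lam j ≠ lam s := by
  intro j s hj hsj hjs
  obtain ⟨hsum, hres_j⟩ :=
    (hres j hj (fun i => α i + if i = j then 1 else 0)).mpr ⟨1, le_rfl, by simp⟩
  have hα_one : ∏ i, lam i ^ α i = 1 := by
    rw [prod_pow_add_ite_one] at hres_j
    exact (mul_eq_right₀ (hlam j)).mp hres_j.symm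
  obtain ⟨k, hk, hl⟩ := (hres j hj (fun i => α i + if i = s then 1 else 0)).mp
    ⟨by rwa [sum_add_ite_one] at hsum ⊢, by rw [prod_pow_add_ite_one, hα_one, one_mul, hjs]⟩
  have hαj := congrFun hl j
  simp only [if_neg hsj.symm, if_true, add_zero] at hαj
  nlinarith

/-- **One-resonance forces distinct eigenvalues (Remark 2.6).**
Let `λ₁, …, λₙ` be nonzero complex numbers and suppose there exists a multi-index
`α = (α₁,…,α_m,0,…,0) ≠ 0 ∈ ℕⁿ` (with `1 ≤ m ≤ n`) such that for each `j ∈ {1,…,m}`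
the set of all `l ∈ ℕⁿ` with `|l| ≥ 2` and `λ_j = λ^l` equals exactly
`{kα + e_j : k ≥ 1}` (the one-resonance condition with respect to `{λ₁,…,λ_m}`).
Then `λ_j ≠ λ_s` for every `j ∈ {1,…,m}` and every `s ∈ {1,…,n}` with `s ≠ j`.
(Indices are 0-based: `j < m` corresponds to the first `m` eigenvalues.) -/
theorem one_resonant_eigenvalues_distinct
    (n m : ℕ) (hm : 1 ≤ m) (hmn : m ≤ n)
    (lam : Fin n → ℂ) (hlam : ∀ i, lam i ≠ 0)
    (α : Fin n → ℕ) (hα0 : α ≠ 0)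
    (hαm : ∀ j : Fin n, m ≤ (j : ℕ) → α j = 0)
    (hres : ∀ j : Fin n, (j : ℕ) < m →
      ∀ l : Fin n → ℕ,
        (2 ≤ ∑ i, l i ∧ lam j = ∏ i, lam i ^ l i) ↔
          (∃ k : ℕ, 1 ≤ k ∧ l = fun i => k * α i + if i = j then 1 else 0)) :
    ∀ j s : Fin n, (j : ℕ) < m → s ≠ j → lam j ≠ lam s :=
  one_resonant_eigenvalues_distinct_general n m lam hlam α hres
end

section
/- Let λ ∈ ℂ with |λ| = 1 and let F(z,w) = (λz (1 − zw/λ)^{-1}, (w/λ)(1 − zw/λ)), a germ of holomorphic diffeomorphism of ℂ² at 0. Then F₁(z,w)·F₂(z,w) = zw for all (z,w) in a neighborhood of 0 where F is defined. Consequently, if (z,w) is such that all iterates F^{∘n}(z,w) are defined and F^{∘n}(z,w) → 0 as n → ∞, then zw = 0; in particular, F admits no basin of attraction at 0. -/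
open Filter

/-- `U` is a basin of attraction at `0` for the self-map `F` of `ℂ²`: a nonempty
(not necessarily connected) open set with `0` on its boundary, for which there is a
neighborhood basis `{Ω_j}` of `0` such that `F(U ∩ Ω_j) ⊆ U ∩ Ω_j` and all orbits of
points of `U ∩ Ω_j` converge to `0`. -/
def IsBasinAt2 (F : ℂ × ℂ → ℂ × ℂ) (U : Set (ℂ × ℂ)) : Prop :=
  U.Nonempty ∧ IsOpen U ∧ (0 : ℂ × ℂ) ∈ frontier U ∧
    ∃ Ω : ℕ → Set (ℂ × ℂ),
      (nhds (0 : ℂ × ℂ)).HasBasis (fun _ : ℕ => True) Ω ∧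
        ∀ i, F '' (U ∩ Ω i) ⊆ U ∩ Ω i ∧
          ∀ p ∈ U ∩ Ω i, Tendsto (fun m => F^[m] p) atTop (nhds 0)

/-!
The product `zw` is a first integral of `F`: the factor `1 - zw/λ` enters the two
coordinates with opposite exponents. Along an orbit converging to `0` the constant value
`zw` must therefore equal its value `0` at the origin. A basin of attraction, on the other
hand, contains points arbitrarily close to `0` with `zw ≠ 0`, since the axes `zw = 0` have
empty interior; near `0` also `zw ≠ λ`, so the map is defined along their whole orbits.
-/

theorem one_sub_div_ne_zero_iff {K : Type*} [Field K] {a b : K} (hb : b ≠ 0) :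
    1 - a / b ≠ 0 ↔ a ≠ b := by
  rw [one_sub_div hb, div_ne_zero_iff, sub_ne_zero, ne_comm]
  exact and_iff_left hb

noncomputable def degenerateGerm (lam : ℂ) (p : ℂ × ℂ) : ℂ × ℂ :=
  (lam * p.1 * (1 - p.1 * p.2 / lam)⁻¹, p.2 / lam * (1 - p.1 * p.2 / lam))

section degenerateGerm

variable {lam : ℂ} (hlam : lam ≠ 0)
include hlam

theorem degenerateGerm_mul {p : ℂ × ℂ} (hp : p.1 * p.2 ≠ lam) :
    (degenerateGerm lam p).1 * (degenerateGerm lam p).2 = p.1 * p.2 := by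
  have hden : 1 - p.1 * p.2 / lam ≠ 0 := (one_sub_div_ne_zero_iff hlam).mpr hp
  simp only [degenerateGerm]
  field_simp

theorem degenerateGerm_iterate_mul {p : ℂ × ℂ} (hp : p.1 * p.2 ≠ lam) (n : ℕ) :
    ((degenerateGerm lam)^[n] p).1 * ((degenerateGerm lam)^[n] p).2 = p.1 * p.2 := by
  induction n with
  | zero => rfl
  | succ n ih =>
    rw [Function.iterate_succ_apply', degenerateGerm_mul hlam (ih ▸ hp), ih]

theorem mul_eq_zero_of_tendsto_iterate_degenerateGerm {p : ℂ × ℂ} (hp : p.1 * p.2 ≠ lam)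
    (h : Tendsto (fun n => (degenerateGerm lam)^[n] p) atTop (nhds 0)) : p.1 * p.2 = 0 := by
  have hmul : Tendsto (fun n => ((degenerateGerm lam)^[n] p).1 * ((degenerateGerm lam)^[n] p).2)
      atTop (nhds 0) := by
    simpa using h.fst_nhds.mul h.snd_nhds
  exact tendsto_const_nhds_iff.mp (hmul.congr (degenerateGerm_iterate_mul hlam hp))

theorem eventually_mul_ne : ∀ᶠ q : ℂ × ℂ in nhds 0, q.1 * q.2 ≠ lam :=
  (continuous_fst.mul continuous_snd).continuousAt.eventually_ne (by simpa using hlam.symm)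

end degenerateGerm

theorem dense_setOf_mul_ne_zero : Dense {q : ℂ × ℂ | q.1 * q.2 ≠ 0} :=
  ((dense_compl_singleton (0 : ℂ)).prod (dense_compl_singleton 0)).mono
    fun _ h => mul_ne_zero h.1 h.2

theorem IsBasinAt2.exists_tendsto_of_dense {F : ℂ × ℂ → ℂ × ℂ} {U : Set (ℂ × ℂ)}
    (hU : IsBasinAt2 F U) {s D : Set (ℂ × ℂ)} (hs : s ∈ nhds 0) (hD : Dense D) :
    ∃ q ∈ s ∩ D, Tendsto (fun n => F^[n] q) atTop (nhds 0) := by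
  obtain ⟨-, hU_open, h0, Ω, hΩ_basis, hΩ⟩ := hU
  have hW : interior (s ∩ Ω 0) ∈ nhds 0 :=
    interior_mem_nhds.mpr (inter_mem hs (hΩ_basis.mem_of_mem trivial))
  obtain ⟨p, hpW, hpU⟩ := mem_closure_iff_nhds.mp (frontier_subset_closure h0) _ hW
  obtain ⟨q, ⟨hqU, hqW⟩, hqD⟩ :=
    hD.inter_open_nonempty _ (hU_open.inter isOpen_interior) ⟨p, hpU, hpW⟩
  have hq : q ∈ s ∩ Ω 0 := interior_subset hqW
  exact ⟨q, ⟨hq.1, hqD⟩, (hΩ 0).2 q ⟨hqU, hq.2⟩⟩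

/-- **A one-resonant degenerate germ with no basin of attraction (Subsection 6.4).**
Let `|λ| = 1` and `F(z,w) = (λz(1 - zw/λ)⁻¹, (w/λ)(1 - zw/λ))`.  Then
`F₁(z,w)·F₂(z,w) = zw` wherever `F` is defined; consequently, if all the iterates
`F^{∘n}(z,w)` are defined and converge to `0`, then `zw = 0`.  In particular `F`
admits no basin of attraction at `0`. -/
theorem degenerate_example_no_basin
    (lam : ℂ) (hlam : ‖lam‖ = 1)
    (F : ℂ × ℂ → ℂ × ℂ)
    (hF : F = fun p : ℂ × ℂ =>
      (lam * p.1 * (1 - p.1 * p.2 / lam)⁻¹, p.2 / lam * (1 - p.1 * p.2 / lam))) :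
    (∀ p : ℂ × ℂ, 1 - p.1 * p.2 / lam ≠ 0 → (F p).1 * (F p).2 = p.1 * p.2)
    ∧ (∀ p : ℂ × ℂ, (∀ n : ℕ, 1 - (F^[n] p).1 * (F^[n] p).2 / lam ≠ 0) →
        Tendsto (fun n => F^[n] p) atTop (nhds 0) → p.1 * p.2 = 0)
    ∧ ¬ ∃ U : Set (ℂ × ℂ), IsBasinAt2 F U := by
  have hlam0 : lam ≠ 0 := norm_ne_zero_iff.mp (hlam ▸ one_ne_zero)
  obtain rfl : F = degenerateGerm lam := hF
  refine ⟨fun p hp => degenerateGerm_mul hlam0 ((one_sub_div_ne_zero_iff hlam0).mp hp),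
    fun p hp => mul_eq_zero_of_tendsto_iterate_degenerateGerm hlam0
      ((one_sub_div_ne_zero_iff hlam0).mp (hp 0)), ?_⟩
  rintro ⟨U, hU⟩
  obtain ⟨q, ⟨hq_ne_lam, hq_ne_zero⟩, hq⟩ :=
    hU.exists_tendsto_of_dense (eventually_mul_ne hlam0) dense_setOf_mul_ne_zero
  exact hq_ne_zero (mul_eq_zero_of_tendsto_iterate_degenerateGerm hlam0 hq_ne_lam hq)
end

section
/- Let λ ∈ ℂ with |λ| = 1, λ not a root of unity, and let F(z,w) = (z − z², λw + λzw), a germ of holomorphic diffeomorphism of ℂ² at 0. If (z₀,w₀) ∈ ℂ² is such that F^{∘n}(z₀,w₀) → 0 as n → ∞, then w₀ = 0. In particular, F (which is one-resonant with index of resonance (1,0) and non-degenerate with Λ(F) = −1, but not parabolically attracting) admits no basin of attraction at 0. -/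
open Filter Topology

lemma tendsto_atTop_of_add_le_succ {a : ℕ → ℝ} {c : ℝ} (hc : 0 < c) (N : ℕ)
    (ha : ∀ n ≥ N, a n + c ≤ a (n + 1)) : Tendsto a atTop atTop := by
  have hlin : ∀ k : ℕ, a N + k * c ≤ a (N + k) := by
    intro k
    induction k with
    | zero => simp
    | succ k ih =>
      rw [← add_assoc]
      push_cast
      linarith [ha (N + k) (Nat.le_add_right N k)]
  rw [← tendsto_add_atTop_iff_nat N]
  refine tendsto_atTop_mono (fun k => ?_)
    (tendsto_atTop_add_const_left _ (a N) (tendsto_natCast_atTop_atTop.atTop_mul_const hc))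
  simpa [add_comm] using hlin k

lemma one_le_norm_one_add {ζ : ℂ} (h : 0 ≤ ζ.re) : 1 ≤ ‖1 + ζ‖ :=
  le_trans (by simpa using h) (Complex.re_le_norm (1 + ζ))

lemma two_le_norm_sub_sq {z : ℂ} (hz : 2 ≤ ‖z‖) : 2 ≤ ‖z - z ^ 2‖ := by
  have : ‖z‖ * (‖z‖ - 1) ≤ ‖z - z ^ 2‖ := by
    rw [norm_sub_rev, mul_sub, mul_one, ← sq, ← norm_pow]
    exact norm_sub_norm_le _ _
  nlinarith

/-- `1 / (z - z²) = 1 / z + 1 + z / (1 - z)`, and `‖z / (1 - z)‖ ≤ 1 / 2`. -/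
lemma re_inv_add_half_le_re_inv_sub_sq {z : ℂ} (h0 : z ≠ 0) (hz : ‖z‖ ≤ 1 / 3) :
    (z⁻¹).re + 1 / 2 ≤ ((z - z ^ 2)⁻¹).re := by
  have h1 : 1 - z ≠ 0 := by
    intro h
    rw [← sub_eq_zero.mp h, norm_one] at hz
    norm_num at hz
  have hid : (z - z ^ 2)⁻¹ = z⁻¹ + 1 + z / (1 - z) := by
    field_simp
    ring
  have hnorm : ‖z / (1 - z)‖ ≤ 1 / 2 := by
    have : 2 / 3 ≤ ‖1 - z‖ := by
      linarith [norm_sub_norm_le (1 : ℂ) z, norm_one (α := ℂ)]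
    rw [norm_div, div_le_iff₀ (by linarith)]
    linarith
  have := neg_le_of_abs_le ((Complex.abs_re_le_norm _).trans hnorm)
  rw [hid, Complex.add_re, Complex.add_re, Complex.one_re]
  linarith

section Orbit

variable {z : ℕ → ℂ} (hz : ∀ n, z (n + 1) = z n - z n ^ 2) (hz0 : Tendsto z atTop (𝓝 0))
include hz hz0

lemma ne_neg_one_of_tendsto_zero (l : ℕ) : z l ≠ -1 := by
  intro hl
  have hbig : ∀ n ≥ l + 1, 2 ≤ ‖z n‖ := by
    refine Nat.le_induction ?_ fun n _ ih => hz n ▸ two_le_norm_sub_sq ih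
    rw [hz, hl]
    norm_num
  have hsmall : ∀ᶠ n in atTop, ‖z n‖ < 2 := by
    simpa using hz0.norm.eventually (gt_mem_nhds (by norm_num : ‖(0 : ℂ)‖ < 2))
  obtain ⟨n, hn, hn'⟩ := (hsmall.and (eventually_ge_atTop (l + 1))).exists
  linarith [hbig n hn']

lemma eventually_re_nonneg_of_tendsto_zero :
    ∀ᶠ n in atTop, 0 ≤ (z n).re := by
  by_cases hzero : ∃ N, z N = 0
  · obtain ⟨N, hN⟩ := hzero
    have hfix : ∀ n ≥ N, z n = 0 :=
      Nat.le_induction hN fun n _ ih => by rw [hz, ih]; ring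
    filter_upwards [eventually_ge_atTop N] with n hn
    simp [hfix n hn]
  simp only [not_exists] at hzero
  obtain ⟨N, hN⟩ := eventually_atTop.mp
    (hz0.eventually (Metric.closedBall_mem_nhds 0 (by norm_num : (0 : ℝ) < 1 / 3)))
  have hgrow : Tendsto (fun n => (z n)⁻¹.re) atTop atTop :=
    tendsto_atTop_of_add_le_succ (by norm_num : (0 : ℝ) < 1 / 2) N fun n hn => by
      rw [hz]
      exact re_inv_add_half_le_re_inv_sub_sq (hzero n) (mem_closedBall_zero_iff.mp (hN n hn))
  filter_upwards [hgrow.eventually_gt_atTop 0] with n hn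
  rw [← inv_inv (z n), Complex.inv_re]
  exact div_nonneg hn.le (Complex.normSq_nonneg _)

end Orbit

lemma eq_zero_of_succ_eq_mul_of_eq_zero {M₀ : Type*} [MulZeroClass M₀] [NoZeroDivisors M₀]
    {w c : ℕ → M₀} (hw : ∀ n, w (n + 1) = c n * w n) (hc : ∀ n, c n ≠ 0) {N : ℕ}
    (hN : w N = 0) : w 0 = 0 := by
  induction N with
  | zero => exact hN
  | succ N ih => exact ih ((mul_eq_zero.mp (hw N ▸ hN)).resolve_left (hc N))

lemma fiber_eq_zero_of_tendsto_zero {lam : ℂ} (hlam : 1 ≤ ‖lam‖) {z w : ℕ → ℂ}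
    (hz : ∀ n, z (n + 1) = z n - z n ^ 2) (hw : ∀ n, w (n + 1) = lam * (1 + z n) * w n)
    (hz0 : Tendsto z atTop (𝓝 0)) (hw0 : Tendsto w atTop (𝓝 0)) : w 0 = 0 := by
  obtain ⟨N, hN⟩ := eventually_atTop.mp (eventually_re_nonneg_of_tendsto_zero hz hz0)
  have hmono : ∀ n ≥ N, ‖w N‖ ≤ ‖w n‖ := by
    refine Nat.le_induction le_rfl fun n hn ih => ih.trans ?_
    rw [hw, norm_mul, norm_mul]
    exact le_mul_of_one_le_left (norm_nonneg _)
      (one_le_mul_of_one_le_of_one_le hlam (one_le_norm_one_add (hN n hn)))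
  have hwN : w N = 0 :=
    norm_le_zero_iff.mp <|
      ge_of_tendsto (by simpa using hw0.norm) (eventually_atTop.mpr ⟨N, hmono⟩)
  refine eq_zero_of_succ_eq_mul_of_eq_zero hw (fun n => mul_ne_zero ?_ ?_) hwN
  · exact norm_pos_iff.mp (one_pos.trans_le hlam)
  · exact fun h => ne_neg_one_of_tendsto_zero hz hz0 n (eq_neg_of_add_eq_zero_right h)

lemma interior_setOf_snd_eq_zero : interior {p : ℂ × ℂ | p.2 = 0} = ∅ := by
  have : {p : ℂ × ℂ | p.2 = 0} = Set.univ ×ˢ {0} := by ext; simp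
  rw [this, interior_prod_eq, interior_singleton, Set.prod_empty]

lemma not_exists_isBasinAt2 {F : ℂ × ℂ → ℂ × ℂ}
    (hF : ∀ p : ℂ × ℂ, Tendsto (fun n => F^[n] p) atTop (𝓝 0) → p.2 = 0) :
    ¬ ∃ U, IsBasinAt2 F U := by
  rintro ⟨U, -, hUopen, hU0, Ω, hΩ, hattr⟩
  obtain ⟨p, hpΩ, hpU⟩ := mem_closure_iff_nhds.mp (frontier_subset_closure hU0)
    (interior (Ω 0)) (interior_mem_nhds.mpr (hΩ.mem_of_mem trivial))
  have hsub : interior (Ω 0) ∩ U ⊆ {p : ℂ × ℂ | p.2 = 0} := fun q hq =>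
    hF q ((hattr 0).2 q ⟨hq.2, interior_subset hq.1⟩)
  have := interior_maximal hsub (isOpen_interior.inter hUopen) ⟨hpΩ, hpU⟩
  rwa [interior_setOf_snd_eq_zero] at this

theorem nondegenerate_not_attracting_example_no_basin_general
    (lam : ℂ) (hlam : ‖lam‖ = 1)
    (F : ℂ × ℂ → ℂ × ℂ)
    (hF : F = fun p : ℂ × ℂ => (p.1 - p.1 ^ 2, lam * p.2 + lam * p.1 * p.2)) :
    (∀ p : ℂ × ℂ, Tendsto (fun n => F^[n] p) atTop (nhds 0) → p.2 = 0)
    ∧ ¬ ∃ U : Set (ℂ × ℂ), IsBasinAt2 F U := by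
  have horbit : ∀ p : ℂ × ℂ, Tendsto (fun n => F^[n] p) atTop (𝓝 0) → p.2 = 0 := by
    intro p hp
    subst hF
    simpa using fiber_eq_zero_of_tendsto_zero hlam.ge
      (z := fun n => (_ ^[n] p).1) (w := fun n => (_ ^[n] p).2)
      (fun n => by simp only [Function.iterate_succ_apply'])
      (fun n => by simp only [Function.iterate_succ_apply']; ring)
      hp.fst_nhds hp.snd_nhds
  exact ⟨horbit, not_exists_isBasinAt2 horbit⟩

/-- **A one-resonant non-degenerate, but not parabolically attracting, germ with no basin
of attraction (Subsection 6.5).**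
Let `|λ| = 1`, `λ` not a root of unity, and `F(z,w) = (z - z², λw + λzw)`.
If `F^{∘n}(z₀,w₀) → 0` as `n → ∞`, then `w₀ = 0`.  In particular `F` (which is
one-resonant with index of resonance `(1,0)` and non-degenerate with `Λ(F) = -1`,
but not parabolically attracting) admits no basin of attraction at `0`. -/
theorem nondegenerate_not_attracting_example_no_basin
    (lam : ℂ) (hlam : ‖lam‖ = 1)
    (hroot : ∀ q : ℕ, 1 ≤ q → lam ^ q ≠ 1)
    (F : ℂ × ℂ → ℂ × ℂ)
    (hF : F = fun p : ℂ × ℂ => (p.1 - p.1 ^ 2, lam * p.2 + lam * p.1 * p.2)) :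
    (∀ p : ℂ × ℂ, Tendsto (fun n => F^[n] p) atTop (nhds 0) → p.2 = 0)
    ∧ ¬ ∃ U : Set (ℂ × ℂ), IsBasinAt2 F U :=
  nondegenerate_not_attracting_example_no_basin_general lam hlam F hF
end
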